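/- Let φ(z) = ∫₀^∞ e^{-tz} dμ(t), μ finite nonnegative with μ((0,∞)) > 0, and suppose 1 > Δ₁ > Δ₂ > 0 satisfy (1/|μ|)∫₀^∞ e^{-4t} dμ(t) < (Δ₁² − Δ₂²)/(Δ₁² + Δ₂²). Then among the four values L_Δ(0,0), L_Δ(1,0), L_Δ(0,1), L_Δ(1,1) (corresponding to the HSIC of the four feature subsets ∅, {1}, {2}, {1,2} under P_Δ), the unique maximum is attained at L_Δ(1,0). In particular L_Δ(1,0) > L_Δ(1,1), L_Δ(1,0) > L_Δ(0,1), and L_Δ(1,0) > L_Δ(0,0). -/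

import Mathlib

/-!
Write `a = φ 0 = |μ|`, `b = φ 4`, `c = φ 8`. Then `L(1,0) = 2Δ₁²(a - b)`, `L(0,1) = 2Δ₂²(a - b)`,
`L(1,1) = (a - c)(Δ₁² + Δ₂²)` and `L(0,0) = 0`. Since `μ` charges `(0, ∞)`, `a > b`, and the
hypothesis reads `b(Δ₁² + Δ₂²) < a(Δ₁² - Δ₂²)`, which forces `Δ₂² < Δ₁²`. The only real comparison
is with `L(1,1)`: Cauchy–Schwarz gives `b² ≤ ac`, hence `a(a - c) ≤ (a - b)(a + b)`, and
`(a + b)(Δ₁² + Δ₂²) < 2aΔ₁²` is the hypothesis once more.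
-/

open MeasureTheory

/-- φ(z) = ∫₀^∞ e^{-tz} dμ(t). -/
noncomputable def phi (μ : Measure ℝ) (z : ℝ) : ℝ := ∫ t, Real.exp (-(t * z)) ∂μ

/-- L_Δ(β) = (φ(0) − φ(4β₁² + 4β₂²))(Δ₁² + Δ₂²) − (φ(4β₁²) − φ(4β₂²))(Δ₁² − Δ₂²). -/
noncomputable def L (φ : ℝ → ℝ) (Δ₁ Δ₂ β₁ β₂ : ℝ) : ℝ :=
  (φ 0 - φ (4 * β₁ ^ 2 + 4 * β₂ ^ 2)) * (Δ₁ ^ 2 + Δ₂ ^ 2)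
    - (φ (4 * β₁ ^ 2) - φ (4 * β₂ ^ 2)) * (Δ₁ ^ 2 - Δ₂ ^ 2)

theorem sq_integral_le_measureReal_univ_mul_integral_sq {α : Type*} [MeasurableSpace α]
    {μ : Measure α} [IsFiniteMeasure μ] {f : α → ℝ} (hf : Integrable f μ)
    (hf2 : Integrable (fun x => f x ^ 2) μ) :
    (∫ x, f x ∂μ) ^ 2 ≤ μ.real Set.univ * ∫ x, f x ^ 2 ∂μ := by
  rcases eq_zero_or_neZero μ with rfl | _
  · simp
  have hm : 0 < μ.real Set.univ := measureReal_univ_pos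
  have jensen : (⨍ x, f x ∂μ) ^ 2 ≤ ⨍ x, f x ^ 2 ∂μ :=
    (Even.convexOn_pow even_two).map_average_le (continuous_pow 2).continuousOn isClosed_univ
      (by simp) hf hf2
  rw [average_eq, average_eq, smul_eq_mul, smul_eq_mul, mul_pow, inv_pow, ← div_eq_inv_mul,
    ← div_eq_inv_mul, div_le_div_iff₀ (by positivity) hm] at jensen
  nlinarith

section LaplaceTransform

variable {μ : Measure ℝ}

theorem ae_nonneg_of_measure_Iio_eq_zero (hsupp : μ (Set.Iio 0) = 0) : ∀ᵐ t ∂μ, 0 ≤ t :=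
  measure_mono_null (fun t ht => show t < 0 from not_le.mp ht) hsupp

theorem integrable_exp_neg_mul [IsFiniteMeasure μ] (hsupp : μ (Set.Iio 0) = 0) {z : ℝ}
    (hz : 0 ≤ z) : Integrable (fun t => Real.exp (-(t * z))) μ := by
  refine (integrable_const (1 : ℝ)).mono' (by fun_prop) ?_
  filter_upwards [ae_nonneg_of_measure_Iio_eq_zero hsupp] with t ht
  rw [Real.norm_of_nonneg (Real.exp_pos _).le, Real.exp_le_one_iff, neg_nonpos]
  exact mul_nonneg ht hz

theorem phi_zero : phi μ 0 = μ.real Set.univ := by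
  simp [phi]

theorem phi_nonneg (z : ℝ) : 0 ≤ phi μ z :=
  integral_nonneg fun _ => (Real.exp_pos _).le

theorem phi_lt_phi_zero [IsFiniteMeasure μ] (hsupp : μ (Set.Iio 0) = 0)
    (hpos : 0 < μ (Set.Ioi 0)) {z : ℝ} (hz : 0 < z) : phi μ z < phi μ 0 := by
  have hint := integrable_exp_neg_mul hsupp hz.le
  have hdiff : phi μ 0 - phi μ z = ∫ t, (1 - Real.exp (-(t * z))) ∂μ := by
    rw [integral_sub (integrable_const 1) hint, phi_zero, integral_const, smul_eq_mul, mul_one,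
      phi]
  have hi : Integrable (fun t => 1 - Real.exp (-(t * z))) μ := (integrable_const 1).sub hint
  rw [← sub_pos, hdiff, integral_pos_iff_support_of_nonneg_ae _ hi]
  · refine hpos.trans_le (measure_mono fun t (ht : 0 < t) => ?_)
    rw [Function.mem_support, sub_ne_zero]
    exact (Real.exp_lt_one_iff.mpr (neg_neg_of_pos (mul_pos ht hz))).ne'
  · filter_upwards [ae_nonneg_of_measure_Iio_eq_zero hsupp] with t ht
    rw [Pi.zero_apply, sub_nonneg, Real.exp_le_one_iff, neg_nonpos]
    exact mul_nonneg ht hz.le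

theorem phi_sq_le_phi_zero_mul_phi_two_mul [IsFiniteMeasure μ] (hsupp : μ (Set.Iio 0) = 0)
    {z : ℝ} (hz : 0 ≤ z) :
    phi μ z ^ 2 ≤ phi μ 0 * phi μ (2 * z) := by
  have hsq : ∀ t, Real.exp (-(t * z)) ^ 2 = Real.exp (-(t * (2 * z))) := fun t => by
    rw [← Real.exp_nat_mul]; ring_nf
  have h := sq_integral_le_measureReal_univ_mul_integral_sq (integrable_exp_neg_mul hsupp hz)
    (by simpa only [hsq] using integrable_exp_neg_mul hsupp (by positivity : 0 ≤ 2 * z))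
  rw [phi_zero]
  simpa only [phi, hsq] using h

end LaplaceTransform

theorem sq_lt_sq_of_nonneg_lt_div {x y r : ℝ} (hr : 0 ≤ r)
    (h : r < (x ^ 2 - y ^ 2) / (x ^ 2 + y ^ 2)) : y ^ 2 < x ^ 2 := by
  rcases div_pos_iff.mp (hr.trans_lt h) with ⟨hnum, -⟩ | ⟨-, hden⟩
  · linarith
  · nlinarith [sq_nonneg x, sq_nonneg y]

section L

variable {φ : ℝ → ℝ} {Δ₁ Δ₂ : ℝ}

theorem L_one_zero : L φ Δ₁ Δ₂ 1 0 = 2 * Δ₁ ^ 2 * (φ 0 - φ 4) := by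
  norm_num [L]; ring

theorem L_zero_one : L φ Δ₁ Δ₂ 0 1 = 2 * Δ₂ ^ 2 * (φ 0 - φ 4) := by
  norm_num [L]; ring

theorem L_one_one : L φ Δ₁ Δ₂ 1 1 = (φ 0 - φ 8) * (Δ₁ ^ 2 + Δ₂ ^ 2) := by
  norm_num [L]

theorem L_zero_zero : L φ Δ₁ Δ₂ 0 0 = 0 := by
  simp [L]

theorem L_zero_zero_lt_L_one_zero (hφ : φ 4 < φ 0) (hΔ : Δ₂ ^ 2 < Δ₁ ^ 2) :
    L φ Δ₁ Δ₂ 0 0 < L φ Δ₁ Δ₂ 1 0 := by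
  rw [L_zero_zero, L_one_zero]
  have : 0 < Δ₁ ^ 2 := (sq_nonneg Δ₂).trans_lt hΔ
  have : 0 < φ 0 - φ 4 := sub_pos.mpr hφ
  positivity

theorem L_zero_one_lt_L_one_zero (hφ : φ 4 < φ 0) (hΔ : Δ₂ ^ 2 < Δ₁ ^ 2) :
    L φ Δ₁ Δ₂ 0 1 < L φ Δ₁ Δ₂ 1 0 := by
  rw [L_zero_one, L_one_zero]
  exact mul_lt_mul_of_pos_right (by linarith) (sub_pos.mpr hφ)

theorem L_one_one_lt_L_one_zero (h0 : 0 < φ 0) (hφ : φ 4 < φ 0) (hcs : φ 4 ^ 2 ≤ φ 0 * φ 8)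
    (hcond : φ 4 * (Δ₁ ^ 2 + Δ₂ ^ 2) < φ 0 * (Δ₁ ^ 2 - Δ₂ ^ 2)) :
    L φ Δ₁ Δ₂ 1 1 < L φ Δ₁ Δ₂ 1 0 := by
  rw [L_one_one, L_one_zero]
  have key : φ 0 * ((φ 0 - φ 8) * (Δ₁ ^ 2 + Δ₂ ^ 2)) < φ 0 * (2 * Δ₁ ^ 2 * (φ 0 - φ 4)) := by
    have hΔ : 0 ≤ Δ₁ ^ 2 + Δ₂ ^ 2 := by positivity
    nlinarith [mul_le_mul_of_nonneg_right hcs hΔ, mul_lt_mul_of_pos_left hcond (sub_pos.mpr hφ)]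
  exact lt_of_mul_lt_mul_left key h0.le

end L

theorem stmt17_general (μ : Measure ℝ) [IsFiniteMeasure μ] (hsupp : μ (Set.Iio 0) = 0)
    (hpos : 0 < μ (Set.Ioi 0)) (Δ₁ Δ₂ : ℝ)
    (hcond : (1 / (μ Set.univ).toReal) * ∫ t, Real.exp (-(4 * t)) ∂μ
      < (Δ₁ ^ 2 - Δ₂ ^ 2) / (Δ₁ ^ 2 + Δ₂ ^ 2)) :
    L (phi μ) Δ₁ Δ₂ 1 0 > L (phi μ) Δ₁ Δ₂ 1 1 ∧
    L (phi μ) Δ₁ Δ₂ 1 0 > L (phi μ) Δ₁ Δ₂ 0 1 ∧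
    L (phi μ) Δ₁ Δ₂ 1 0 > L (phi μ) Δ₁ Δ₂ 0 0 := by
  have hφ : phi μ 4 < phi μ 0 := phi_lt_phi_zero hsupp hpos (by norm_num)
  have h0 : 0 < phi μ 0 := (phi_nonneg 4).trans_lt hφ
  have hratio : phi μ 4 / phi μ 0 < (Δ₁ ^ 2 - Δ₂ ^ 2) / (Δ₁ ^ 2 + Δ₂ ^ 2) := by
    rw [phi_zero, measureReal_def]
    simpa only [phi, mul_comm _ (4 : ℝ), one_div, inv_mul_eq_div] using hcond
  have hΔ : Δ₂ ^ 2 < Δ₁ ^ 2 := sq_lt_sq_of_nonneg_lt_div (div_nonneg (phi_nonneg 4) h0.le) hratio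
  have hsum : 0 < Δ₁ ^ 2 + Δ₂ ^ 2 := by nlinarith [sq_nonneg Δ₂]
  have hcs : phi μ 4 ^ 2 ≤ phi μ 0 * phi μ 8 := by
    simpa only [show (2 : ℝ) * 4 = 8 by norm_num] using
      phi_sq_le_phi_zero_mul_phi_two_mul hsupp (z := 4) (by norm_num)
  rw [div_lt_div_iff₀ h0 hsum] at hratio
  exact ⟨L_one_one_lt_L_one_zero h0 hφ hcs (by linarith), L_zero_one_lt_L_one_zero hφ hΔ,
    L_zero_zero_lt_L_one_zero hφ hΔ⟩

/-- if 1 > Δ₁ > Δ₂ > 0 satisfy (1/|μ|)∫₀^∞ e^{-4t} dμ(t) < (Δ₁²−Δ₂²)/(Δ₁²+Δ₂²),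
then among L_Δ(0,0), L_Δ(1,0), L_Δ(0,1), L_Δ(1,1) (the HSIC values of the four feature
subsets ∅, {1}, {2}, {1,2} up to a positive factor), the unique maximum is L_Δ(1,0). -/
theorem stmt17 (μ : Measure ℝ) [IsFiniteMeasure μ] (hsupp : μ (Set.Iio 0) = 0)
    (hpos : 0 < μ (Set.Ioi 0)) (Δ₁ Δ₂ : ℝ) (hΔ₁ : Δ₁ < 1) (h12 : Δ₂ < Δ₁) (h2 : 0 < Δ₂)
    (hcond : (1 / (μ Set.univ).toReal) * ∫ t, Real.exp (-(4 * t)) ∂μ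
      < (Δ₁ ^ 2 - Δ₂ ^ 2) / (Δ₁ ^ 2 + Δ₂ ^ 2)) :
    L (phi μ) Δ₁ Δ₂ 1 0 > L (phi μ) Δ₁ Δ₂ 1 1 ∧
    L (phi μ) Δ₁ Δ₂ 1 0 > L (phi μ) Δ₁ Δ₂ 0 1 ∧
    L (phi μ) Δ₁ Δ₂ 1 0 > L (phi μ) Δ₁ Δ₂ 0 0 :=
  stmt17_general μ hsupp hpos Δ₁ Δ₂ hcond
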